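/- Let X, X̃, Ẋ, W, Y be random variables on finite types with joint pmf factorizing as p(x, x̃, w, ẋ, y) = p(x) · p(x̃ | x) · p(w | x̃) · p(ẋ | x) · p(y | x). Then Y and W are conditionally independent given the pair (X̃, Ẋ): for all (x̃, ẋ) with P(X̃ = x̃, Ẋ = ẋ) > 0, P(Y = y, W = w | X̃ = x̃, Ẋ = ẋ) = P(Y = y | X̃ = x̃, Ẋ = ẋ) · P(W = w | X̃ = x̃, Ẋ = ẋ). -/

import Mathlib

open scoped BigOperators Classical

/-- Probability of an event under a pmf on a finite sample space. -/
noncomputable def Pr {Ω : Type*} [Fintype Ω] (p : Ω → ℝ) (A : Ω → Prop) : ℝ :=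
  ∑ ω, if A ω then p ω else 0

/-- Conditional probability `P(A | B) = P(A ∩ B) / P(B)`. -/
noncomputable def cPr {Ω : Type*} [Fintype Ω] (p : Ω → ℝ) (A B : Ω → Prop) : ℝ :=
  Pr p (fun ω => A ω ∧ B ω) / Pr p B

/-- Conditional expectation `E[Z | A] = E[Z · 1_A] / P(A)`. -/
noncomputable def cExp {Ω : Type*} [Fintype Ω] (p : Ω → ℝ) (Z : Ω → ℝ) (A : Ω → Prop) : ℝ :=
  (∑ ω, if A ω then Z ω * p ω else 0) / Pr p A

lemma Pr_nonneg {Ω : Type*} [Fintype Ω] (p : Ω → ℝ) (hp : ∀ ω, 0 ≤ p ω) (A : Ω → Prop) :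
    0 ≤ Pr p A := by
  refine Finset.sum_nonneg fun ω _ => ?_
  split <;> simp [hp ω]

lemma Pr_mono {Ω : Type*} [Fintype Ω] (p : Ω → ℝ) (hp : ∀ ω, 0 ≤ p ω) {A B : Ω → Prop}
    (h : ∀ ω, A ω → B ω) : Pr p A ≤ Pr p B := by
  refine Finset.sum_le_sum fun ω _ => ?_
  by_cases hA : A ω
  · simp [hA, h ω hA]
  · simp only [if_neg hA]; split <;> simp [hp ω]

lemma Pr_congr {Ω : Type*} [Fintype Ω] (p : Ω → ℝ) {A B : Ω → Prop}
    (h : ∀ ω, A ω ↔ B ω) : Pr p A = Pr p B := by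
  unfold Pr; exact Finset.sum_congr rfl fun ω _ => by simp [h ω]

lemma Pr_fiber {Ω α : Type*} [Fintype Ω] [Fintype α] (p : Ω → ℝ) (f : Ω → α) (A : Ω → Prop) :
    Pr p A = ∑ a, Pr p (fun ω => f ω = a ∧ A ω) := by
  unfold Pr
  rw [Finset.sum_comm]
  refine Finset.sum_congr rfl fun ω _ => ?_
  by_cases hA : A ω
  · simp [hA, Finset.sum_ite_eq]
  · simp [hA]

lemma sum_cPr_one {Ω α : Type*} [Fintype Ω] [Fintype α] (p : Ω → ℝ) (f : Ω → α)
    (B : Ω → Prop) (hB : Pr p B ≠ 0) :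
    ∑ a, cPr p (fun ω => f ω = a) B = 1 := by
  unfold cPr
  rw [← Finset.sum_div, ← Pr_fiber, div_self hB]

lemma cPr_eq_zero {Ω : Type*} [Fintype Ω] (p : Ω → ℝ) (hp : ∀ ω, 0 ≤ p ω)
    {A B C : Ω → Prop} (h0 : Pr p C = 0) (h : ∀ ω, A ω ∧ B ω → C ω) :
    cPr p A B = 0 := by
  unfold cPr
  have h1 : Pr p (fun ω => A ω ∧ B ω) = 0 :=
    le_antisymm (h0 ▸ Pr_mono p hp h) (Pr_nonneg p hp _)
  rw [h1, zero_div]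

lemma Pr_expand3 {Ω 𝒳 𝒲 𝒴 : Type*} [Fintype Ω] [Fintype 𝒳] [Fintype 𝒲] [Fintype 𝒴]
    (p : Ω → ℝ) (X : Ω → 𝒳) (W : Ω → 𝒲) (Y : Ω → 𝒴) (A : Ω → Prop) :
    Pr p A = ∑ x, ∑ w, ∑ y, Pr p (fun ω => X ω = x ∧ W ω = w ∧ Y ω = y ∧ A ω) := by
  rw [Pr_fiber p X A]
  refine Finset.sum_congr rfl fun x _ => ?_
  rw [Pr_fiber p W]
  refine Finset.sum_congr rfl fun w _ => ?_
  rw [Pr_fiber p Y]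
  refine Finset.sum_congr rfl fun y _ => ?_
  exact Pr_congr p (by tauto)

lemma Pr_expand2 {Ω 𝒳 𝒲 : Type*} [Fintype Ω] [Fintype 𝒳] [Fintype 𝒲]
    (p : Ω → ℝ) (X : Ω → 𝒳) (W : Ω → 𝒲) (A : Ω → Prop) :
    Pr p A = ∑ x, ∑ w, Pr p (fun ω => X ω = x ∧ W ω = w ∧ A ω) := by
  rw [Pr_fiber p X A]
  refine Finset.sum_congr rfl fun x _ => ?_
  rw [Pr_fiber p W]
  refine Finset.sum_congr rfl fun w _ => ?_
  exact Pr_congr p (by tauto)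

/-- Theorem 1 (discrete): under the MCM factorization after selective imputation,
`Y ⫫ W | (X̃, Ẋ)`. -/
theorem stmt_1 {Ω 𝒳 𝒳t 𝒳d 𝒲 𝒴 : Type*} [Fintype Ω] [Fintype 𝒳] [Fintype 𝒳t]
    [Fintype 𝒳d] [Fintype 𝒲] [Fintype 𝒴]
    (p : Ω → ℝ) (hp : ∀ ω, 0 ≤ p ω) (hsum : ∑ ω, p ω = 1)
    (X : Ω → 𝒳) (Xt : Ω → 𝒳t) (Xd : Ω → 𝒳d) (W : Ω → 𝒲) (Y : Ω → 𝒴)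
    (hfact : ∀ (x : 𝒳) (xt : 𝒳t) (w : 𝒲) (xd : 𝒳d) (y : 𝒴),
      Pr p (fun ω => X ω = x ∧ Xt ω = xt ∧ W ω = w ∧ Xd ω = xd ∧ Y ω = y) =
        Pr p (fun ω => X ω = x)
          * cPr p (fun ω => Xt ω = xt) (fun ω => X ω = x)
          * cPr p (fun ω => W ω = w) (fun ω => Xt ω = xt)
          * cPr p (fun ω => Xd ω = xd) (fun ω => X ω = x)
          * cPr p (fun ω => Y ω = y) (fun ω => X ω = x)) :
    ∀ (xt : 𝒳t) (xd : 𝒳d), 0 < Pr p (fun ω => Xt ω = xt ∧ Xd ω = xd) →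
      ∀ (y : 𝒴) (w : 𝒲),
        cPr p (fun ω => Y ω = y ∧ W ω = w) (fun ω => Xt ω = xt ∧ Xd ω = xd) =
          cPr p (fun ω => Y ω = y) (fun ω => Xt ω = xt ∧ Xd ω = xd)
            * cPr p (fun ω => W ω = w) (fun ω => Xt ω = xt ∧ Xd ω = xd) := by
  intro xt xd hpos y w
  -- shorthand functions
  have a : 𝒳 → ℝ := fun x => Pr p (fun ω => X ω = x)
  -- conditional densities sum to one / vanish facts
  have har : ∀ x : 𝒳, Pr p (fun ω => X ω = x) *
      (∑ y', cPr p (fun ω => Y ω = y') (fun ω => X ω = x)) = Pr p (fun ω => X ω = x) := by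
    intro x
    by_cases hx : Pr p (fun ω => X ω = x) = 0
    · simp [hx]
    · rw [sum_cPr_one p Y _ hx, mul_one]
  -- Xt has positive probability, else the conditioning event would be null
  have hXt : Pr p (fun ω => Xt ω = xt) ≠ 0 := by
    intro h0
    have ht0 : ∀ x : 𝒳, cPr p (fun ω => Xt ω = xt) (fun ω => X ω = x) = 0 :=
      fun x => cPr_eq_zero p hp h0 (fun ω h => h.1)
    have hzero : Pr p (fun ω => Xt ω = xt ∧ Xd ω = xd) = 0 := by
      rw [Pr_expand3 p X W Y]
      refine Finset.sum_eq_zero fun x _ => Finset.sum_eq_zero fun w' _ =>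
        Finset.sum_eq_zero fun y' _ => ?_
      rw [Pr_congr p (B := fun ω => X ω = x ∧ Xt ω = xt ∧ W ω = w' ∧ Xd ω = xd ∧ Y ω = y')
        (by tauto), hfact, ht0 x]
      ring
    rw [hzero] at hpos; exact lt_irrefl 0 hpos
  have hgsum : ∑ w', cPr p (fun ω => W ω = w') (fun ω => Xt ω = xt) = 1 :=
    sum_cPr_one p W _ hXt
  -- the four expansions
  have hS : Pr p (fun ω => Xt ω = xt ∧ Xd ω = xd) =
      ∑ x, Pr p (fun ω => X ω = x)
        * cPr p (fun ω => Xt ω = xt) (fun ω => X ω = x)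
        * cPr p (fun ω => Xd ω = xd) (fun ω => X ω = x) := by
    rw [Pr_expand3 p X W Y]
    refine Finset.sum_congr rfl fun x _ => ?_
    have step : ∀ w' : 𝒲,
        (∑ y', Pr p (fun ω => X ω = x ∧ W ω = w' ∧ Y ω = y' ∧ Xt ω = xt ∧ Xd ω = xd)) =
        cPr p (fun ω => W ω = w') (fun ω => Xt ω = xt) *
          (Pr p (fun ω => X ω = x)
            * cPr p (fun ω => Xt ω = xt) (fun ω => X ω = x)
            * cPr p (fun ω => Xd ω = xd) (fun ω => X ω = x)) := by
      intro w'
      have : ∀ y' : 𝒴,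
          Pr p (fun ω => X ω = x ∧ W ω = w' ∧ Y ω = y' ∧ Xt ω = xt ∧ Xd ω = xd) =
          (cPr p (fun ω => W ω = w') (fun ω => Xt ω = xt)
            * cPr p (fun ω => Xt ω = xt) (fun ω => X ω = x)
            * cPr p (fun ω => Xd ω = xd) (fun ω => X ω = x)) *
          (Pr p (fun ω => X ω = x) * cPr p (fun ω => Y ω = y') (fun ω => X ω = x)) := by
        intro y'
        rw [Pr_congr p (B := fun ω => X ω = x ∧ Xt ω = xt ∧ W ω = w' ∧ Xd ω = xd ∧ Y ω = y')
          (by tauto), hfact]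
        ring
      rw [Finset.sum_congr rfl fun y' _ => this y', ← Finset.mul_sum, ← Finset.mul_sum, har]
      ring
    rw [Finset.sum_congr rfl fun w' _ => step w', ← Finset.sum_mul, hgsum, one_mul]
  have hT : Pr p (fun ω => (Y ω = y) ∧ Xt ω = xt ∧ Xd ω = xd) =
      ∑ x, Pr p (fun ω => X ω = x)
        * cPr p (fun ω => Xt ω = xt) (fun ω => X ω = x)
        * cPr p (fun ω => Xd ω = xd) (fun ω => X ω = x)
        * cPr p (fun ω => Y ω = y) (fun ω => X ω = x) := by
    rw [Pr_expand2 p X W]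
    refine Finset.sum_congr rfl fun x _ => ?_
    have : ∀ w' : 𝒲,
        Pr p (fun ω => X ω = x ∧ W ω = w' ∧ (Y ω = y) ∧ Xt ω = xt ∧ Xd ω = xd) =
        (Pr p (fun ω => X ω = x)
          * cPr p (fun ω => Xt ω = xt) (fun ω => X ω = x)
          * cPr p (fun ω => Xd ω = xd) (fun ω => X ω = x)
          * cPr p (fun ω => Y ω = y) (fun ω => X ω = x)) *
        cPr p (fun ω => W ω = w') (fun ω => Xt ω = xt) := by
      intro w'
      rw [Pr_congr p (B := fun ω => X ω = x ∧ Xt ω = xt ∧ W ω = w' ∧ Xd ω = xd ∧ Y ω = y)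
        (by tauto), hfact]
      ring
    rw [Finset.sum_congr rfl fun w' _ => this w', ← Finset.mul_sum, hgsum, mul_one]
  have hM : Pr p (fun ω => (W ω = w) ∧ Xt ω = xt ∧ Xd ω = xd) =
      cPr p (fun ω => W ω = w) (fun ω => Xt ω = xt) *
      ∑ x, Pr p (fun ω => X ω = x)
        * cPr p (fun ω => Xt ω = xt) (fun ω => X ω = x)
        * cPr p (fun ω => Xd ω = xd) (fun ω => X ω = x) := by
    rw [Pr_expand2 p X Y, Finset.mul_sum]
    refine Finset.sum_congr rfl fun x _ => ?_
    have : ∀ y' : 𝒴,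
        Pr p (fun ω => X ω = x ∧ Y ω = y' ∧ (W ω = w) ∧ Xt ω = xt ∧ Xd ω = xd) =
        (cPr p (fun ω => W ω = w) (fun ω => Xt ω = xt)
          * cPr p (fun ω => Xt ω = xt) (fun ω => X ω = x)
          * cPr p (fun ω => Xd ω = xd) (fun ω => X ω = x)) *
        (Pr p (fun ω => X ω = x) * cPr p (fun ω => Y ω = y') (fun ω => X ω = x)) := by
      intro y'
      rw [Pr_congr p (B := fun ω => X ω = x ∧ Xt ω = xt ∧ W ω = w ∧ Xd ω = xd ∧ Y ω = y')
        (by tauto), hfact]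
      ring
    rw [Finset.sum_congr rfl fun y' _ => this y', ← Finset.mul_sum, ← Finset.mul_sum, har]
    ring
  have hJ : Pr p (fun ω => (Y ω = y ∧ W ω = w) ∧ Xt ω = xt ∧ Xd ω = xd) =
      cPr p (fun ω => W ω = w) (fun ω => Xt ω = xt) *
      ∑ x, Pr p (fun ω => X ω = x)
        * cPr p (fun ω => Xt ω = xt) (fun ω => X ω = x)
        * cPr p (fun ω => Xd ω = xd) (fun ω => X ω = x)
        * cPr p (fun ω => Y ω = y) (fun ω => X ω = x) := by
    rw [Pr_fiber p X, Finset.mul_sum]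
    refine Finset.sum_congr rfl fun x _ => ?_
    rw [Pr_congr p (B := fun ω => X ω = x ∧ Xt ω = xt ∧ W ω = w ∧ Xd ω = xd ∧ Y ω = y)
      (by tauto), hfact]
    ring
  -- finish
  have hSne : Pr p (fun ω => Xt ω = xt ∧ Xd ω = xd) ≠ 0 := ne_of_gt hpos
  unfold cPr
  rw [hJ, hT, hM, hS]
  rw [← hS] at *
  field_simp
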